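/- arXiv:1703.02699 — 3 statements merged into one kernel-verified Lean document; each statement's English description precedes it below -/
import Mathlib

section
/- Let S₁ and S₂ be nonempty finite subsets of ℝⁿ such that S₁ ⊆ {x ∈ ℝⁿ : ∑_{i=1}^{n₁} x_i = N₁ and x_i = 0 for all i > n₁} and S₂ ⊆ {x ∈ ℝⁿ : ∑_{i=n₁}^{n} x_i = N₂ and x_i = 0 for all i < n₁}, and let P₁ and P₂ be their convex hulls. Then the set of extreme points of the Minkowski sum P₁ + P₂ is exactly the sumset (extreme points of P₁) + (extreme points of P₂); that is, the vertices of P₁ + P₂ are precisely the sums of a vertex of P₁ and a vertex of P₂. -/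
/-! Both polytopes lie in coordinate slices whose directions meet only in `0`: a difference of two
points of the first slice is supported on the coordinates `≤ n₁` and has zero sum there, a
difference of two points of the second is supported on the coordinates `≥ n₁`, so a common
difference lives on the single coordinate `n₁` and vanishes. Hence addition is injective on
`P₁ × P₂`. A linear map that is injective on a convex set maps its extreme points exactly onto the
extreme points of the image, and `ext (P₁ × P₂) = ext P₁ × ext P₂`. -/

open Pointwise Set

section ExtremePoints

variable {𝕜 E F : Type*} [Ring 𝕜] [PartialOrder 𝕜] [IsOrderedRing 𝕜]
  [AddCommGroup E] [Module 𝕜 E] [AddCommGroup F] [Module 𝕜 F]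

theorem LinearMap.image_extremePoints_of_injOn (f : E →ₗ[𝕜] F) {s : Set E} (hs : Convex 𝕜 s)
    (hf : InjOn f s) : f '' s.extremePoints 𝕜 = (f '' s).extremePoints 𝕜 := by
  have hseg : ∀ x y, f '' openSegment 𝕜 x y = openSegment 𝕜 (f x) (f y) :=
    image_openSegment 𝕜 f.toAffineMap
  ext y
  constructor
  · rintro ⟨x, ⟨hxs, hx⟩, rfl⟩
    refine ⟨mem_image_of_mem f hxs, ?_⟩
    rintro _ ⟨x₁, hx₁, rfl⟩ _ ⟨x₂, hx₂, rfl⟩ hy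
    rw [← hseg] at hy
    obtain ⟨z, hz, hzx⟩ := hy
    obtain rfl : z = x := hf (hs.openSegment_subset hx₁ hx₂ hz) hxs hzx
    exact congrArg f (hx hx₁ hx₂ hz)
  · rintro ⟨⟨x, hxs, rfl⟩, hy⟩
    refine ⟨x, ⟨hxs, fun x₁ hx₁ x₂ hx₂ hx => ?_⟩, rfl⟩
    have hfx : f x ∈ openSegment 𝕜 (f x₁) (f x₂) := hseg x₁ x₂ ▸ mem_image_of_mem f hx
    exact hf hx₁ hxs (hy (mem_image_of_mem f hx₁) (mem_image_of_mem f hx₂) hfx)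

theorem extremePoints_add_of_injOn {A B : Set E} (hA : Convex 𝕜 A) (hB : Convex 𝕜 B)
    (hAB : InjOn (fun p : E × E => p.1 + p.2) (A ×ˢ B)) :
    (A + B).extremePoints 𝕜 = A.extremePoints 𝕜 + B.extremePoints 𝕜 := by
  have h := (LinearMap.id.coprod LinearMap.id : E × E →ₗ[𝕜] E).image_extremePoints_of_injOn
    (hA.prod hB) hAB
  rw [extremePoints_prod] at h
  rw [← add_image_prod, ← add_image_prod]
  exact h.symm

end ExtremePoints

section CoordSlice

variable {ι M : Type*} [AddCommGroup M]

def coordSlice (s : Finset ι) (c : M) : Set (ι → M) :=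
  {x | ∑ i ∈ s, x i = c ∧ ∀ i ∉ s, x i = 0}

theorem convex_coordSlice {𝕜 : Type*} [Semiring 𝕜] [PartialOrder 𝕜] [Module 𝕜 M]
    (s : Finset ι) (c : M) : Convex 𝕜 (coordSlice s c) := by
  rintro x ⟨hxs, hx⟩ y ⟨hys, hy⟩ a b - - hab
  refine ⟨?_, fun i hi => by simp [hx i hi, hy i hi]⟩
  simp only [Pi.add_apply, Pi.smul_apply, Finset.sum_add_distrib, ← Finset.smul_sum, hxs, hys,
    ← add_smul, hab, one_smul]

theorem eq_zero_of_sum_eq_zero_of_card_le_one {u : Finset ι} (hu : u.card ≤ 1) {d : ι → M}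
    (hd : ∀ i ∉ u, d i = 0) (hsum : ∑ i ∈ u, d i = 0) : d = 0 := by
  funext i
  by_cases hi : i ∈ u
  · rw [Pi.zero_apply, ← hsum, Finset.sum_eq_single_of_mem i hi fun j hj hji =>
      absurd (Finset.card_le_one.1 hu j hj i hi) hji]
  · exact hd i hi

theorem injOn_add_coordSlice [DecidableEq ι] {s t : Finset ι} (hst : (s ∩ t).card ≤ 1)
    (c c' : M) :
    InjOn (fun p : (ι → M) × (ι → M) => p.1 + p.2) (coordSlice s c ×ˢ coordSlice t c') := by
  rintro ⟨a, b⟩ ⟨⟨has, ha⟩, -, hb⟩ ⟨a', b'⟩ ⟨⟨has', ha'⟩, -, hb'⟩ (h : a + b = a' + b')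
  dsimp only at has ha hb has' ha' hb'
  suffices a - a' = 0 by
    obtain rfl := sub_eq_zero.1 this
    rw [add_right_inj] at h
    rw [h]
  have hsupp : ∀ i ∉ s ∩ t, (a - a') i = 0 := by
    intro i hi
    rw [Finset.mem_inter, not_and_or] at hi
    rcases hi with hi | hi
    · simp [ha i hi, ha' i hi]
    · simpa [hb i hi, hb' i hi, sub_eq_zero] using congrFun h i
  refine eq_zero_of_sum_eq_zero_of_card_le_one hst hsupp ?_
  rw [Finset.sum_subset Finset.inter_subset_left fun i _ hi => hsupp i hi]
  simp [Finset.sum_sub_distrib, has, has']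

end CoordSlice

theorem card_filter_succ_le_inter_filter_le_succ_le_one (n k : ℕ) :
    (Finset.univ.filter (fun i : Fin n => (i : ℕ) + 1 ≤ k) ∩
      Finset.univ.filter (fun i : Fin n => k ≤ (i : ℕ) + 1)).card ≤ 1 :=
  Finset.card_le_one.2 fun i hi j hj => by
    simp only [Finset.mem_inter, Finset.mem_filter, Finset.mem_univ, true_and] at hi hj
    exact Fin.ext (by omega)

theorem extremePoints_minkowski_sum_convexHull_general
    (n n₁ : ℕ) (N₁ N₂ : ℝ)
    (S₁ S₂ : Set (Fin n → ℝ))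
    (hS₁ : S₁ ⊆ {x : Fin n → ℝ |
      (∑ i ∈ Finset.univ.filter (fun i : Fin n => (i : ℕ) + 1 ≤ n₁), x i) = N₁ ∧
      ∀ i : Fin n, n₁ < (i : ℕ) + 1 → x i = 0})
    (hS₂ : S₂ ⊆ {x : Fin n → ℝ |
      (∑ i ∈ Finset.univ.filter (fun i : Fin n => n₁ ≤ (i : ℕ) + 1), x i) = N₂ ∧
      ∀ i : Fin n, (i : ℕ) + 1 < n₁ → x i = 0}) :
    (convexHull ℝ S₁ + convexHull ℝ S₂).extremePoints ℝ
      = (convexHull ℝ S₁).extremePoints ℝ + (convexHull ℝ S₂).extremePoints ℝ := by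
  set s₁ := Finset.univ.filter fun i : Fin n => (i : ℕ) + 1 ≤ n₁
  set s₂ := Finset.univ.filter fun i : Fin n => n₁ ≤ (i : ℕ) + 1
  have h₁ : convexHull ℝ S₁ ⊆ coordSlice s₁ N₁ :=
    convexHull_min (fun x hx => ⟨(hS₁ hx).1, fun i hi => (hS₁ hx).2 i (by simpa [s₁] using hi)⟩)
      (convex_coordSlice _ _)
  have h₂ : convexHull ℝ S₂ ⊆ coordSlice s₂ N₂ :=
    convexHull_min (fun x hx => ⟨(hS₂ hx).1, fun i hi => (hS₂ hx).2 i (by simpa [s₂] using hi)⟩)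
      (convex_coordSlice _ _)
  have hinj := injOn_add_coordSlice (card_filter_succ_le_inter_filter_le_succ_le_one n n₁) N₁ N₂
  exact extremePoints_add_of_injOn (convex_convexHull ℝ S₁) (convex_convexHull ℝ S₂)
    (hinj.mono (prod_mono h₁ h₂))

/-- **Sharpness of the state polytope decomposition (convex-geometry form, two factors).**
Let `S₁, S₂` be nonempty finite subsets of `ℝⁿ` (coordinates indexed by `Fin n`, thought of as
`x₁, …, x_n`), with `S₁` contained in the affine subspace
`{x | ∑_{i=1}^{n₁} x_i = N₁, x_i = 0 for i > n₁}` and `S₂` contained in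
`{x | ∑_{i=n₁}^{n} x_i = N₂, x_i = 0 for i < n₁}`.  If `P₁, P₂` are their convex hulls, then the
extreme points (vertices) of the Minkowski sum `P₁ + P₂` are exactly the sums of an extreme point
of `P₁` and an extreme point of `P₂`.  (An index `i : Fin n` represents the coordinate `x_{i+1}`.) -/
theorem extremePoints_minkowski_sum_convexHull
    (n n₁ : ℕ) (hn : 1 ≤ n) (hn₁ : 1 ≤ n₁) (hn₁n : n₁ ≤ n) (N₁ N₂ : ℝ)
    (S₁ S₂ : Set (Fin n → ℝ))
    (hS₁ne : S₁.Nonempty) (hS₁fin : S₁.Finite)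
    (hS₂ne : S₂.Nonempty) (hS₂fin : S₂.Finite)
    (hS₁ : S₁ ⊆ {x : Fin n → ℝ |
      (∑ i ∈ Finset.univ.filter (fun i : Fin n => (i : ℕ) + 1 ≤ n₁), x i) = N₁ ∧
      ∀ i : Fin n, n₁ < (i : ℕ) + 1 → x i = 0})
    (hS₂ : S₂ ⊆ {x : Fin n → ℝ |
      (∑ i ∈ Finset.univ.filter (fun i : Fin n => n₁ ≤ (i : ℕ) + 1), x i) = N₂ ∧
      ∀ i : Fin n, (i : ℕ) + 1 < n₁ → x i = 0}) :
    (convexHull ℝ S₁ + convexHull ℝ S₂).extremePoints ℝ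
      = (convexHull ℝ S₁).extremePoints ℝ + (convexHull ℝ S₂).extremePoints ℝ :=
  extremePoints_minkowski_sum_convexHull_general n n₁ N₁ N₂ S₁ S₂ hS₁ hS₂
end

section
/- Let E be a real vector space, let A₁ and A₂ be affine subspaces of E whose direction subspaces intersect trivially (direction(A₁) ∩ direction(A₂) = {0}), and let P₁ ⊆ A₁ and P₂ ⊆ A₂ be convex subsets. Then the set of extreme points of the Minkowski sum P₁ + P₂ equals the sumset (extreme points of P₁) + (extreme points of P₂). -/
/-!
Addition `(x₁, x₂) ↦ x₁ + x₂` maps `P₁ × P₂` onto `P₁ + P₂`, and it is injective there because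
a second decomposition `x₁ + x₂ = y₁ + y₂` gives `x₁ - y₁ = y₂ - x₂ ∈ direction A₁ ⊓ direction A₂`.
A linear map that is injective on a convex set carries its extreme points exactly onto the extreme
points of the image, and the extreme points of a product are the products of extreme points.
-/

open Pointwise Set

section LinearImage

variable {𝕜 E F : Type*} [Semiring 𝕜] [PartialOrder 𝕜] [AddCommMonoid E] [Module 𝕜 E]
  [AddCommMonoid F] [Module 𝕜 F]

theorem LinearMap.map_mem_openSegment (f : E →ₗ[𝕜] F) {x a b : E}
    (hx : x ∈ openSegment 𝕜 a b) : f x ∈ openSegment 𝕜 (f a) (f b) := by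
  obtain ⟨μ, ν, hμ, hν, hμν, rfl⟩ := hx
  exact ⟨μ, ν, hμ, hν, hμν, by rw [map_add, map_smul, map_smul]⟩

/-- Convexity is needed for `⊇`: it puts the preimage of a segment point back into `s`,
where injectivity identifies it. -/
theorem Convex.extremePoints_image_of_injOn {s : Set E} (hs : Convex 𝕜 s) {f : E →ₗ[𝕜] F}
    (hf : InjOn f s) : (f '' s).extremePoints 𝕜 = f '' s.extremePoints 𝕜 := by
  ext y
  constructor
  · rintro ⟨⟨x, hx, rfl⟩, hext⟩
    refine ⟨x, ⟨hx, fun a ha b hb hab => ?_⟩, rfl⟩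
    exact hf ha hx (hext (mem_image_of_mem f ha) (mem_image_of_mem f hb) (f.map_mem_openSegment hab))
  · rintro ⟨x, hx, rfl⟩
    refine ⟨mem_image_of_mem f hx.1, ?_⟩
    rintro _ ⟨a, ha, rfl⟩ _ ⟨b, hb, rfl⟩ ⟨μ, ν, hμ, hν, hμν, hfx⟩
    have hcombo : μ • a + ν • b = x := by
      refine hf (hs ha hb hμ.le hν.le hμν) hx.1 ?_
      rw [map_add, map_smul, map_smul, hfx]
    rw [hx.2 ha hb ⟨μ, ν, hμ, hν, hμν, hcombo⟩]

end LinearImage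

theorem AffineSubspace.injOn_add_of_direction_inf_eq_bot {k V : Type*} [Ring k]
    [AddCommGroup V] [Module k V] {A₁ A₂ : AffineSubspace k V}
    (hdir : A₁.direction ⊓ A₂.direction = ⊥) :
    InjOn (fun p : V × V => p.1 + p.2) ((A₁ : Set V) ×ˢ (A₂ : Set V)) := by
  rintro ⟨x₁, x₂⟩ ⟨hx₁, hx₂⟩ ⟨y₁, y₂⟩ ⟨hy₁, hy₂⟩ (h : x₁ + x₂ = y₁ + y₂)
  have hdiff : x₁ - y₁ = y₂ - x₂ := by rw [sub_eq_sub_iff_add_eq_add, h, add_comm]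
  have hmem : x₁ - y₁ ∈ A₁.direction ⊓ A₂.direction :=
    ⟨vsub_mem_direction hx₁ hy₁, hdiff ▸ vsub_mem_direction hy₂ hx₂⟩
  rw [hdir, Submodule.mem_bot, sub_eq_zero] at hmem
  subst hmem
  rw [add_left_cancel h]

/-- If `P₁, P₂` are convex subsets of a real vector space `E` contained in affine subspaces
`A₁, A₂` whose direction subspaces intersect trivially, then the extreme points of the
Minkowski sum `P₁ + P₂` are exactly the sums of an extreme point of `P₁` and an extreme
point of `P₂`. -/
theorem extremePoints_add_of_direction_inf_eq_bot
    (E : Type*) [AddCommGroup E] [Module ℝ E]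
    (A₁ A₂ : AffineSubspace ℝ E)
    (hdir : A₁.direction ⊓ A₂.direction = ⊥)
    (P₁ P₂ : Set E) (hP₁A : P₁ ⊆ (A₁ : Set E)) (hP₂A : P₂ ⊆ (A₂ : Set E))
    (hP₁ : Convex ℝ P₁) (hP₂ : Convex ℝ P₂) :
    (P₁ + P₂).extremePoints ℝ = P₁.extremePoints ℝ + P₂.extremePoints ℝ := by
  let σ : E × E →ₗ[ℝ] E := LinearMap.coprod LinearMap.id LinearMap.id
  have hσ : ∀ s t : Set E, s + t = σ '' (s ×ˢ t) := fun s t => by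
    rw [← image2_add, ← image_prod]
    rfl
  have hinj : InjOn σ (P₁ ×ˢ P₂) :=
    (AffineSubspace.injOn_add_of_direction_inf_eq_bot hdir).mono (prod_mono hP₁A hP₂A)
  rw [hσ, hσ, (hP₁.prod hP₂).extremePoints_image_of_injOn hinj, extremePoints_prod]
end

section
/- Let J ⊆ S_m be any linear subspace such that the monomial x_ℓ^m does not belong to J. Then the three subspaces J ∩ W₁, J ∩ W₂ and J ∩ W₃ are independent: their sum inside S_m is an internal direct sum (each one intersects the sum of the other two trivially). -/
open Pointwise

namespace StatePolytopePaper

/-- Exponent vectors of monomials in the variables `x₀, …, x_n`. -/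
abbrev Exp (n : ℕ) := Fin (n + 1) → ℕ

/-- The ambient vector space of formal `k`-linear combinations of monomials, i.e. the polynomial
ring `k[x₀, …, x_n]` with monomials indexed by their exponent vectors.  `S_m` and all spans of
sets of degree-`m` monomials are subspaces of this space. -/
abbrev Poly (k : Type*) [Field k] (n : ℕ) := Exp n →₀ k

/-- The span of the set of monomials with exponent vectors in `M`. -/
def spanM (k : Type*) [Field k] (n : ℕ) (M : Set (Exp n)) : Submodule k (Poly k n) :=
  Finsupp.supported k k M

/-- The set of exponent vectors of degree `m`; `S_m = spanM k n (degSet n m)`. -/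
def degSet (n m : ℕ) : Set (Exp n) := {α | ∑ i, α i = m}

/-- The state set `Ξ_M(U) ⊆ ℤ^{n+1}` of a subspace `U ⊆ span(M)`: all sums `∑_{α ∈ A} α` over
subsets `A ⊆ M` such that `span(M)` is the internal direct sum of `U` and `span(M ∖ A)`. -/
def stateSet (k : Type*) [Field k] (n : ℕ) (M : Set (Exp n)) (U : Submodule k (Poly k n)) :
    Set (Fin (n + 1) → ℤ) :=
  {ξ | ∃ A : Finset (Exp n), ↑A ⊆ M ∧
    U ⊓ spanM k n (M \ ↑A) = ⊥ ∧ U ⊔ spanM k n (M \ ↑A) = spanM k n M ∧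
    ξ = ∑ α ∈ A, fun i => (α i : ℤ)}

/-- The state polytope `𝒫_M(U) ⊆ ℝ^{n+1}`: the convex hull of the state set. -/
noncomputable def statePolytope (k : Type*) [Field k] (n : ℕ) (M : Set (Exp n))
    (U : Submodule k (Poly k n)) : Set (Fin (n + 1) → ℝ) :=
  convexHull ℝ ((fun (ξ : Fin (n + 1) → ℤ) (i : Fin (n + 1)) => (ξ i : ℝ)) '' stateSet k n M U)

/-- `M₁`: degree-`m` exponent vectors supported on `x₀, …, x_ℓ`. -/
def M₁ (n m ℓ : ℕ) : Set (Exp n) :=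
  {α | ∑ i, α i = m ∧ ∀ j : Fin (n + 1), ℓ < (j : ℕ) → α j = 0}

/-- `M₂`: degree-`m` exponent vectors supported on `x_ℓ, …, x_n`. -/
def M₂ (n m ℓ : ℕ) : Set (Exp n) :=
  {α | ∑ i, α i = m ∧ ∀ j : Fin (n + 1), (j : ℕ) < ℓ → α j = 0}

/-- `M₃`: degree-`m` exponent vectors divisible by some `x_i`, `i < ℓ`, and some `x_j`, `j > ℓ`. -/
def M₃ (n m ℓ : ℕ) : Set (Exp n) :=
  {α | ∑ i, α i = m ∧ (∃ i : Fin (n + 1), (i : ℕ) < ℓ ∧ α i ≠ 0) ∧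
    (∃ j : Fin (n + 1), ℓ < (j : ℕ) ∧ α j ≠ 0)}

/-- `τ = ∑_{α ∈ M₃} α ∈ ℤ^{n+1}`. -/
def tau (n m ℓ : ℕ) : Fin (n + 1) → ℤ :=
  ∑ α ∈ (Finset.Nat.antidiagonalTuple (n + 1) m).filter
      (fun α => (∃ i : Fin (n + 1), (i : ℕ) < ℓ ∧ α i ≠ 0) ∧
        (∃ j : Fin (n + 1), ℓ < (j : ℕ) ∧ α j ≠ 0)),
    fun i => (α i : ℤ)

/-
`W₁ ∩ W₃ = W₂ ∩ W₃ = 0`, and `W₁ ∩ W₂` is the line spanned by `x_ℓ^m`. Since the `Wᵢ` are spanned by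
sets of monomials, `Wᵢ ∩ (Wⱼ + W_k)` is spanned by the monomials shared by `Wᵢ` and `Wⱼ + W_k`, which
is at most `x_ℓ^m`; so `(J ∩ Wᵢ) ∩ (J ∩ Wⱼ + J ∩ W_k) ⊆ J ∩ k·x_ℓ^m = 0`.
-/

lemma spanM_singleton {k : Type*} [Field k] {n : ℕ} (e : Exp n) :
    spanM k n {e} = k ∙ Finsupp.single e (1 : k) := by
  rw [spanM, Finsupp.supported_eq_span_single, Set.image_singleton]

lemma inf_spanM_inf_sup_eq_bot {k : Type*} [Field k] {n : ℕ} (J : Submodule k (Poly k n))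
    {S T U : Set (Exp n)} {e : Exp n} (hSTU : S ∩ (T ∪ U) ⊆ {e})
    (he : Finsupp.single e (1 : k) ∉ J) :
    (J ⊓ spanM k n S) ⊓ ((J ⊓ spanM k n T) ⊔ (J ⊓ spanM k n U)) = ⊥ := by
  have hle : (J ⊓ spanM k n S) ⊓ ((J ⊓ spanM k n T) ⊔ (J ⊓ spanM k n U)) ≤ J ⊓ spanM k n {e} :=
    calc (J ⊓ spanM k n S) ⊓ ((J ⊓ spanM k n T) ⊔ (J ⊓ spanM k n U))
        ≤ J ⊓ (spanM k n S ⊓ (spanM k n T ⊔ spanM k n U)) := by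
          rw [← inf_assoc]
          exact inf_le_inf_left _ (sup_le_sup inf_le_right inf_le_right)
      _ = J ⊓ spanM k n (S ∩ (T ∪ U)) := by
          simp only [spanM, Finsupp.supported_union, Finsupp.supported_inter]
      _ ≤ J ⊓ spanM k n {e} := inf_le_inf_left _ (Finsupp.supported_mono hSTU)
  rwa [spanM_singleton, (Submodule.disjoint_span_singleton.mpr fun h => absurd h he).eq_bot,
    le_bot_iff] at hle

lemma M₁_inter_M₂_subset {n m ℓ : ℕ} (hℓn : ℓ < n) :
    M₁ n m ℓ ∩ M₂ n m ℓ ⊆ {fun i : Fin (n + 1) => if (i : ℕ) = ℓ then m else 0} := by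
  rintro α ⟨⟨hsum, hα₁⟩, -, hα₂⟩
  have hzero : ∀ j : Fin (n + 1), (j : ℕ) ≠ ℓ → α j = 0 := fun j hj =>
    hj.lt_or_gt.elim (hα₂ j) (hα₁ j)
  let iℓ : Fin (n + 1) := ⟨ℓ, by omega⟩
  have hαℓ : α iℓ = m := by
    rw [← hsum, Finset.sum_eq_single iℓ (fun j _ hj => hzero j (Fin.val_ne_of_ne hj))
      (by simp)]
  funext i
  by_cases hi : (i : ℕ) = ℓ
  · rw [show i = iℓ from Fin.ext hi, hαℓ, if_pos rfl]
  · rw [if_neg hi, hzero i hi]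

lemma disjoint_M₁_M₃ (n m ℓ : ℕ) : Disjoint (M₁ n m ℓ) (M₃ n m ℓ) :=
  Set.disjoint_left.mpr fun _ ⟨_, hα₁⟩ ⟨_, _, j, hj, hαj⟩ => hαj (hα₁ j hj)

lemma disjoint_M₂_M₃ (n m ℓ : ℕ) : Disjoint (M₂ n m ℓ) (M₃ n m ℓ) :=
  Set.disjoint_left.mpr fun _ ⟨_, hα₂⟩ ⟨_, ⟨i, hi, hαi⟩, _⟩ => hαi (hα₂ i hi)

theorem inf_spans_independent_general (k : Type*) [Field k] (n m ℓ : ℕ)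
    (hℓn : ℓ < n)
    (J : Submodule k (Poly k n))
    (hxℓ : Finsupp.single (fun i : Fin (n + 1) => if (i : ℕ) = ℓ then m else 0) (1 : k) ∉ J) :
    (J ⊓ spanM k n (M₁ n m ℓ)) ⊓
        ((J ⊓ spanM k n (M₂ n m ℓ)) ⊔ (J ⊓ spanM k n (M₃ n m ℓ))) = ⊥ ∧
      (J ⊓ spanM k n (M₂ n m ℓ)) ⊓
        ((J ⊓ spanM k n (M₁ n m ℓ)) ⊔ (J ⊓ spanM k n (M₃ n m ℓ))) = ⊥ ∧
      (J ⊓ spanM k n (M₃ n m ℓ)) ⊓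
        ((J ⊓ spanM k n (M₁ n m ℓ)) ⊔ (J ⊓ spanM k n (M₂ n m ℓ))) = ⊥ := by
  have h₁₂ := M₁_inter_M₂_subset (m := m) hℓn
  have h₁₃ := disjoint_M₁_M₃ n m ℓ
  have h₂₃ := disjoint_M₂_M₃ n m ℓ
  refine ⟨inf_spanM_inf_sup_eq_bot J ?_ hxℓ, inf_spanM_inf_sup_eq_bot J ?_ hxℓ,
    inf_spanM_inf_sup_eq_bot J ?_ hxℓ⟩
  · rwa [Set.inter_union_distrib_left, h₁₃.inter_eq, Set.union_empty]
  · rwa [Set.inter_union_distrib_left, h₂₃.inter_eq, Set.union_empty, Set.inter_comm]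
  · rw [(Set.disjoint_union_right.mpr ⟨h₁₃.symm, h₂₃.symm⟩).inter_eq]
    exact Set.empty_subset _

/-- If `J ⊆ S_m` is a subspace not containing the monomial `x_ℓ^m`, then the three subspaces
`J ∩ W₁`, `J ∩ W₂`, `J ∩ W₃` are independent: each one meets the sum of the other two
trivially, so their sum inside `S_m` is an internal direct sum. -/
theorem inf_spans_independent (k : Type*) [Field k] (n m ℓ : ℕ)
    (hn : 1 ≤ n) (hm : 1 ≤ m) (hℓ0 : 0 < ℓ) (hℓn : ℓ < n)
    (J : Submodule k (Poly k n))
    (hJ : J ≤ spanM k n (degSet n m))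
    (hxℓ : Finsupp.single (fun i : Fin (n + 1) => if (i : ℕ) = ℓ then m else 0) (1 : k) ∉ J) :
    (J ⊓ spanM k n (M₁ n m ℓ)) ⊓
        ((J ⊓ spanM k n (M₂ n m ℓ)) ⊔ (J ⊓ spanM k n (M₃ n m ℓ))) = ⊥ ∧
      (J ⊓ spanM k n (M₂ n m ℓ)) ⊓
        ((J ⊓ spanM k n (M₁ n m ℓ)) ⊔ (J ⊓ spanM k n (M₃ n m ℓ))) = ⊥ ∧
      (J ⊓ spanM k n (M₃ n m ℓ)) ⊓
        ((J ⊓ spanM k n (M₁ n m ℓ)) ⊔ (J ⊓ spanM k n (M₂ n m ℓ))) = ⊥ :=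
  inf_spans_independent_general k n m ℓ hℓn J hxℓ

end StatePolytopePaper
end
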